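/- arXiv:math/0602662 — 2 statements merged into one kernel-verified Lean document; each statement's English description precedes it below -/
import Mathlib

section
/- Let A = (A₁,A₂,A₃,A₄) : ℝ⁴ → ℝ⁴ be a continuously differentiable covector field. Then A satisfies the invariance conditions L_ξA = 0 for the three vector fields ξ = e₁, ξ = e₃ and ξ = e₁₃ = (x³,0,−x¹,0) (i.e. ∂₁A_i = 0, ∂₃A_i = 0 and x³∂₁A_i − x¹∂₃A_i + A₁δ³ᵢ − A₃δ¹ᵢ = 0 for i = 1,…,4) if and only if A₁ ≡ 0, A₃ ≡ 0 and there exist continuously differentiable functions f, g : ℝ² → ℝ such that A₂(x) = f(x², x⁴) and A₄(x) = g(x², x⁴) for all x. (This is the class P₍₃,₂₎ for λ = 0, the motion group of the Euclidean plane Ox¹x³.) -/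
open Real

/-- Partial derivative of a scalar function on ℝ⁴ in the j-th coordinate direction. -/
noncomputable def pd (j : Fin 4) (f : (Fin 4 → ℝ) → ℝ) (x : Fin 4 → ℝ) : ℝ :=
  fderiv ℝ f x (Pi.single j 1)

/-- The i-th component of the Lie derivative of the covector field A along
the vector field ξ at the point x:  Σ_j ξ^j ∂_j A_i + Σ_j A_j ∂_i ξ^j. -/
noncomputable def lieCov (ξ A : (Fin 4 → ℝ) → Fin 4 → ℝ) (x : Fin 4 → ℝ) (i : Fin 4) : ℝ :=
  (∑ j : Fin 4, ξ x j * pd j (fun y => A y i) x)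
    + ∑ j : Fin 4, A x j * pd i (fun y => ξ y j) x

/-- Invariance condition L_ξ A = 0 on all of ℝ⁴. -/
def PInvariant (ξ A : (Fin 4 → ℝ) → Fin 4 → ℝ) : Prop :=
  ∀ x i, lieCov ξ A x i = 0

/-- Invariance condition L_ξ A = 0 on a set M. -/
def PInvariantOn (ξ A : (Fin 4 → ℝ) → Fin 4 → ℝ) (M : Set (Fin 4 → ℝ)) : Prop :=
  ∀ x ∈ M, ∀ i, lieCov ξ A x i = 0

def e1 : (Fin 4 → ℝ) → Fin 4 → ℝ := fun _ => ![1, 0, 0, 0]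
def e2 : (Fin 4 → ℝ) → Fin 4 → ℝ := fun _ => ![0, 1, 0, 0]
def e3 : (Fin 4 → ℝ) → Fin 4 → ℝ := fun _ => ![0, 0, 1, 0]
def e4 : (Fin 4 → ℝ) → Fin 4 → ℝ := fun _ => ![0, 0, 0, 1]
def e12 : (Fin 4 → ℝ) → Fin 4 → ℝ := fun x => ![-x 1, x 0, 0, 0]
def e13 : (Fin 4 → ℝ) → Fin 4 → ℝ := fun x => ![x 2, 0, -x 0, 0]
def e23 : (Fin 4 → ℝ) → Fin 4 → ℝ := fun x => ![0, -x 2, x 1, 0]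
def e14 : (Fin 4 → ℝ) → Fin 4 → ℝ := fun x => ![x 3, 0, 0, x 0]
def e24 : (Fin 4 → ℝ) → Fin 4 → ℝ := fun x => ![0, x 3, 0, x 1]
def e34 : (Fin 4 → ℝ) → Fin 4 → ℝ := fun x => ![0, 0, x 3, x 2]

/- Auxiliary lemmas -/

lemma pd_const (j : Fin 4) (c : ℝ) (x : Fin 4 → ℝ) : pd j (fun _ => c) x = 0 := by
  simp [pd]

lemma pd_coord (j k : Fin 4) (x : Fin 4 → ℝ) :
    pd j (fun y => y k) x = if k = j then 1 else 0 := by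
  have : (fun y : Fin 4 → ℝ => y k) = (ContinuousLinearMap.proj k : (Fin 4 → ℝ) →L[ℝ] ℝ) := rfl
  rw [pd, this, ContinuousLinearMap.fderiv]
  simp [Pi.single_apply]

lemma pd_neg_coord (j k : Fin 4) (x : Fin 4 → ℝ) :
    pd j (fun y => -(y k)) x = -(if k = j then 1 else 0) := by
  rw [pd, fderiv_fun_neg]
  simp only [ContinuousLinearMap.neg_apply, neg_inj]
  exact pd_coord j k x

lemma lie_e1 (A : (Fin 4 → ℝ) → Fin 4 → ℝ) (x : Fin 4 → ℝ) (i : Fin 4) :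
    lieCov e1 A x i = pd 0 (fun y => A y i) x := by
  simp [lieCov, e1, Fin.sum_univ_four, pd_const]

lemma lie_e3 (A : (Fin 4 → ℝ) → Fin 4 → ℝ) (x : Fin 4 → ℝ) (i : Fin 4) :
    lieCov e3 A x i = pd 2 (fun y => A y i) x := by
  simp [lieCov, e3, Fin.sum_univ_four, pd_const]

lemma lie_e13 (A : (Fin 4 → ℝ) → Fin 4 → ℝ) (x : Fin 4 → ℝ) (i : Fin 4) :
    lieCov e13 A x i = x 2 * pd 0 (fun y => A y i) x - x 0 * pd 2 (fun y => A y i) x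
      + (A x 0 * (if (2 : Fin 4) = i then 1 else 0)
         - A x 2 * (if (0 : Fin 4) = i then 1 else 0)) := by
  simp [lieCov, e13, Fin.sum_univ_four, pd_const, pd_coord, pd_neg_coord]
  ring

lemma const_dir {F : (Fin 4 → ℝ) → ℝ} (hF : Differentiable ℝ F) (v : Fin 4 → ℝ)
    (h : ∀ x, fderiv ℝ F x v = 0) (x : Fin 4 → ℝ) (t : ℝ) : F (x + t • v) = F x := by
  have hline : ∀ s : ℝ, HasDerivAt (fun s : ℝ => F (x + s • v)) 0 s := by
    intro s
    have h1 : HasDerivAt (fun s : ℝ => x + s • v) v s := by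
      simpa using ((hasDerivAt_id s).smul_const v).const_add x
    have h2 := (hF (x + s • v)).hasFDerivAt.comp_hasDerivAt s h1
    rw [h] at h2
    exact h2
  have := is_const_of_deriv_eq_zero (f := fun s : ℝ => F (x + s • v))
    (fun s => (hline s).differentiableAt) (fun s => (hline s).deriv) t 0
  simpa using this

/-- The continuous linear map y ↦ (y 1, y 3). -/
noncomputable def proj13 : (Fin 4 → ℝ) →L[ℝ] ℝ × ℝ :=
  (ContinuousLinearMap.proj (1 : Fin 4)).prod (ContinuousLinearMap.proj (3 : Fin 4))

lemma pd_off13 (f : ℝ × ℝ → ℝ) (hf : Differentiable ℝ f) (j : Fin 4)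
    (hj1 : (Pi.single j 1 : Fin 4 → ℝ) 1 = 0) (hj3 : (Pi.single j 1 : Fin 4 → ℝ) 3 = 0) (x : Fin 4 → ℝ) :
    pd j (fun y => f (y 1, y 3)) x = 0 := by
  have hcomp : (fun y : Fin 4 → ℝ => f (y 1, y 3)) = f ∘ proj13 := rfl
  rw [pd, hcomp, fderiv_comp x (hf (proj13 x)) proj13.differentiableAt,
    ContinuousLinearMap.fderiv]
  have hz : proj13 (Pi.single j 1) = 0 := by
    have h : proj13 (Pi.single j 1) = ((Pi.single j 1 : Fin 4 → ℝ) 1, (Pi.single j 1 : Fin 4 → ℝ) 3) := rfl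
    rw [h, hj1, hj3]; rfl
  simp [hz]

/-- Class P_{3,2} for λ = 0 (motion group of the Euclidean plane Ox¹x³):
A is invariant under e₁, e₃, e₁₃ iff A₁ ≡ 0, A₃ ≡ 0 and A₂, A₄ depend only on (x², x⁴). -/
theorem class_P32_lambda_zero (A : (Fin 4 → ℝ) → Fin 4 → ℝ) (hA : ContDiff ℝ 1 A) :
    (PInvariant e1 A ∧ PInvariant e3 A ∧ PInvariant e13 A) ↔
      ((∀ x, A x 0 = 0) ∧ (∀ x, A x 2 = 0) ∧
        ∃ f g : ℝ × ℝ → ℝ, ContDiff ℝ 1 f ∧ ContDiff ℝ 1 g ∧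
          ∀ x, A x 1 = f (x 1, x 3) ∧ A x 3 = g (x 1, x 3)) := by
  have hAi : ∀ i : Fin 4, ContDiff ℝ 1 (fun y => A y i) := fun i => contDiff_pi.mp hA i
  constructor
  · rintro ⟨H1, H3, H13⟩
    have hp0 : ∀ x (i : Fin 4), pd 0 (fun y => A y i) x = 0 := by
      intro x i; have := H1 x i; rwa [lie_e1] at this
    have hp2 : ∀ x (i : Fin 4), pd 2 (fun y => A y i) x = 0 := by
      intro x i; have := H3 x i; rwa [lie_e3] at this
    have h0 : ∀ x, A x 0 = 0 := by
      intro x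
      have := H13 x 2
      rw [lie_e13, hp0, hp2] at this
      simpa using this
    have h2 : ∀ x, A x 2 = 0 := by
      intro x
      have := H13 x 0
      rw [lie_e13, hp0, hp2] at this
      simpa using this
    refine ⟨h0, h2, fun p => A ![0, p.1, 0, p.2] 1, fun p => A ![0, p.1, 0, p.2] 3, ?_, ?_, ?_⟩
    case _ | _ =>
      first
      | exact (hAi 1).comp (by
          apply contDiff_pi.2
          intro i; fin_cases i <;> simp <;> fun_prop)
      | exact (hAi 3).comp (by
          apply contDiff_pi.2
          intro i; fin_cases i <;> simp <;> fun_prop)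
    · intro x
      have key : ∀ i : Fin 4, A x i = A ![0, x 1, 0, x 3] i := by
        intro i
        have hdiff : Differentiable ℝ (fun y => A y i) := (hAi i).differentiable one_ne_zero
        have s1 := const_dir hdiff ((Pi.single 0 1 : Fin 4 → ℝ)) (fun y => hp0 y i) x (-(x 0))
        have s2 := const_dir hdiff ((Pi.single 2 1 : Fin 4 → ℝ)) (fun y => hp2 y i)
          (x + (-(x 0)) • (Pi.single 0 1 : Fin 4 → ℝ)) (-(x 2))
        have heq : (x + (-(x 0)) • (Pi.single 0 1 : Fin 4 → ℝ))
              + (-(x 2)) • (Pi.single 2 1 : Fin 4 → ℝ)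
            = ![0, x 1, 0, x 3] := by
          funext k
          fin_cases k <;> simp [Pi.single_apply]
        rw [heq] at s2
        exact (s2.trans s1).symm
      exact ⟨key 1, key 3⟩
  · rintro ⟨h0, h2, f, g, hf, hg, hfg⟩
    have hA0 : (fun y => A y 0) = fun _ => (0:ℝ) := funext h0
    have hA2 : (fun y => A y 2) = fun _ => (0:ℝ) := funext h2
    have hA1 : (fun y => A y 1) = fun y => f (y 1, y 3) := funext fun y => (hfg y).1
    have hA3 : (fun y => A y 3) = fun y => g (y 1, y 3) := funext fun y => (hfg y).2
    have hp0 : ∀ x (i : Fin 4), pd 0 (fun y => A y i) x = 0 := by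
      intro x i
      fin_cases i
      · show pd 0 (fun y => A y 0) x = 0
        rw [hA0]; exact pd_const _ _ _
      · show pd 0 (fun y => A y 1) x = 0
        rw [hA1]; exact pd_off13 f (hf.differentiable one_ne_zero) 0 (by simp) (by simp) x
      · show pd 0 (fun y => A y 2) x = 0
        rw [hA2]; exact pd_const _ _ _
      · show pd 0 (fun y => A y 3) x = 0
        rw [hA3]; exact pd_off13 g (hg.differentiable one_ne_zero) 0 (by simp) (by simp) x
    have hp2 : ∀ x (i : Fin 4), pd 2 (fun y => A y i) x = 0 := by
      intro x i
      fin_cases i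
      · show pd 2 (fun y => A y 0) x = 0
        rw [hA0]; exact pd_const _ _ _
      · show pd 2 (fun y => A y 1) x = 0
        rw [hA1]; exact pd_off13 f (hf.differentiable one_ne_zero) 2 (by simp) (by simp) x
      · show pd 2 (fun y => A y 2) x = 0
        rw [hA2]; exact pd_const _ _ _
      · show pd 2 (fun y => A y 3) x = 0
        rw [hA3]; exact pd_off13 g (hg.differentiable one_ne_zero) 2 (by simp) (by simp) x
    refine ⟨fun x i => ?_, fun x i => ?_, fun x i => ?_⟩
    · rw [lie_e1, hp0]
    · rw [lie_e3, hp2]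
    · rw [lie_e13, hp0, hp2, h0, h2]; ring
end

section
/- Fix μ ≠ 0. A continuously differentiable covector field A : ℝ⁴ → ℝ⁴ satisfies the invariance conditions L_ξA = 0 for ξ = e₁, ξ = e₂, ξ = e₃ and ξ = e₁₃ + μe₄ = (x³, 0, −x¹, μ) if and only if there exist constants C₁, C₂, C₃, C₄ ∈ ℝ such that for all x: A₁(x) = C₁·sin(x⁴/μ) + C₂·cos(x⁴/μ), A₃(x) = C₁·cos(x⁴/μ) − C₂·sin(x⁴/μ), A₂(x) = C₃ and A₄(x) = C₄. (This is the class P₍₄,₂₎.) -/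
open Real

lemma pd_proj (j k : Fin 4) (x : Fin 4 → ℝ) :
    pd j (fun y : Fin 4 → ℝ => y k) x = (Pi.single j 1 : Fin 4 → ℝ) k := by
  have h : (fun y : Fin 4 → ℝ => y k)
      = ⇑(ContinuousLinearMap.proj (R := ℝ) (φ := fun _ : Fin 4 => ℝ) k) := rfl
  rw [pd, h, ContinuousLinearMap.fderiv]
  rfl

lemma pd_neg (j : Fin 4) (f : (Fin 4 → ℝ) → ℝ) (x : Fin 4 → ℝ) :
    pd j (fun y => -(f y)) x = -pd j f x := by
  simp [pd, fderiv_neg]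

lemma fderiv_pi_apply (f : (Fin 4 → ℝ) → ℝ) (x w : Fin 4 → ℝ) :
    fderiv ℝ f x w = ∑ j, w j * pd j f x := by
  have hw : w = ∑ j : Fin 4, w j • (Pi.single j 1 : Fin 4 → ℝ) := by
    funext k
    simp [Finset.sum_apply, Pi.single_apply, Finset.sum_ite_eq']
  conv_lhs => rw [hw]
  rw [map_sum]
  simp [pd, map_smul, smul_eq_mul]

lemma hasF_proj3 (x : Fin 4 → ℝ) : HasFDerivAt (fun y : Fin 4 → ℝ => y 3)
    (ContinuousLinearMap.proj (R := ℝ) (φ := fun _ : Fin 4 => ℝ) 3) x :=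
  (ContinuousLinearMap.proj (R := ℝ) (φ := fun _ : Fin 4 => ℝ) 3).hasFDerivAt

lemma hasF_div (μ : ℝ) (x : Fin 4 → ℝ) : HasFDerivAt (fun y : Fin 4 → ℝ => y 3 / μ)
    (μ⁻¹ • ContinuousLinearMap.proj (R := ℝ) (φ := fun _ : Fin 4 => ℝ) 3) x := by
  have h := (hasF_proj3 x).const_mul μ⁻¹
  have he : (fun y : Fin 4 → ℝ => y 3 / μ) = fun y => μ⁻¹ * y 3 := by
    funext y; ring
  rw [he]; exact h

/-- Class P_{4,2}. -/
theorem class_P42 (μ : ℝ) (hμ : μ ≠ 0)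
    (A : (Fin 4 → ℝ) → Fin 4 → ℝ) (hA : ContDiff ℝ 1 A) :
    (PInvariant e1 A ∧ PInvariant e2 A ∧ PInvariant e3 A ∧
      PInvariant (fun x => ![x 2, 0, -x 0, μ]) A) ↔
      ∃ C1 C2 C3 C4 : ℝ,
        ∀ x, A x 0 = C1 * sin (x 3 / μ) + C2 * cos (x 3 / μ) ∧
          A x 2 = C1 * cos (x 3 / μ) - C2 * sin (x 3 / μ) ∧
          A x 1 = C3 ∧ A x 3 = C4 := by
  constructor
  · rintro ⟨h1, h2, h3, h4⟩
    have hAd : ∀ i : Fin 4, Differentiable ℝ (fun y => A y i) := fun i =>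
      (ContinuousLinearMap.proj (R := ℝ) (φ := fun _ : Fin 4 => ℝ) i).differentiable.comp
        (hA.differentiable one_ne_zero)
    have p0 : ∀ (x : Fin 4 → ℝ) (i : Fin 4), pd 0 (fun y => A y i) x = 0 := by
      intro x i
      simpa [lieCov, e1, Fin.sum_univ_four, pd_const] using h1 x i
    have p1 : ∀ (x : Fin 4 → ℝ) (i : Fin 4), pd 1 (fun y => A y i) x = 0 := by
      intro x i
      simpa [lieCov, e2, Fin.sum_univ_four, pd_const] using h2 x i
    have p2 : ∀ (x : Fin 4 → ℝ) (i : Fin 4), pd 2 (fun y => A y i) x = 0 := by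
      intro x i
      simpa [lieCov, e3, Fin.sum_univ_four, pd_const] using h3 x i
    -- equations from the fourth generator
    have q0 : ∀ x : Fin 4 → ℝ, μ * pd 3 (fun y => A y 0) x = A x 2 := by
      intro x
      have := h4 x 0
      simp [lieCov, Fin.sum_univ_four, pd_proj, pd_neg, pd_const, p0, p2,
        Pi.single_apply] at this
      linarith
    have q1 : ∀ x : Fin 4 → ℝ, pd 3 (fun y => A y 1) x = 0 := by
      intro x
      have := h4 x 1
      simp [lieCov, Fin.sum_univ_four, pd_proj, pd_neg, pd_const, p0, p2,
        Pi.single_apply] at this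
      rcases this with h | h
      · exact absurd h hμ
      · exact h
    have q2 : ∀ x : Fin 4 → ℝ, μ * pd 3 (fun y => A y 2) x = -(A x 0) := by
      intro x
      have := h4 x 2
      simp [lieCov, Fin.sum_univ_four, pd_proj, pd_neg, pd_const, p0, p2,
        Pi.single_apply] at this
      linarith
    have q3 : ∀ x : Fin 4 → ℝ, pd 3 (fun y => A y 3) x = 0 := by
      intro x
      have := h4 x 3
      simp [lieCov, Fin.sum_univ_four, pd_proj, pd_neg, pd_const, p0, p2,
        Pi.single_apply] at this
      rcases this with h | h
      · exact absurd h hμ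
      · exact h
    have hF : ∀ (i : Fin 4) (x w : Fin 4 → ℝ),
        fderiv ℝ (fun y => A y i) x w = w 3 * pd 3 (fun y => A y i) x := by
      intro i x w
      rw [fderiv_pi_apply]
      simp [Fin.sum_univ_four, p0, p1, p2]
    -- A 1 and A 3 are constant
    have c1 : ∀ x : Fin 4 → ℝ, A x 1 = A 0 1 := by
      intro x
      refine is_const_of_fderiv_eq_zero (hAd 1) (fun z => ?_) x 0
      ext w
      simp [hF, q1]
    have c3 : ∀ x : Fin 4 → ℝ, A x 3 = A 0 3 := by
      intro x
      refine is_const_of_fderiv_eq_zero (hAd 3) (fun z => ?_) x 0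
      ext w
      simp [hF, q3]
    have g0 : ∀ z : Fin 4 → ℝ, pd 3 (fun y => A y 0) z = μ⁻¹ * A z 2 := by
      intro z
      have h := q0 z
      field_simp
      linarith [h]
    have g2 : ∀ z : Fin 4 → ℝ, pd 3 (fun y => A y 2) z = -(μ⁻¹ * A z 0) := by
      intro z
      have h := q2 z
      field_simp
      linarith [h]
    -- the invariants u and v
    set U : (Fin 4 → ℝ) → ℝ :=
      fun z => A z 0 * Real.sin (z 3 / μ) + A z 2 * Real.cos (z 3 / μ) with hU
    set V : (Fin 4 → ℝ) → ℝ :=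
      fun z => A z 0 * Real.cos (z 3 / μ) - A z 2 * Real.sin (z 3 / μ) with hV
    have hUc : ∀ x : Fin 4 → ℝ, U x = U 0 := by
      intro x
      have hdiff : Differentiable ℝ U := by
        have hd3 : Differentiable ℝ (fun z : Fin 4 → ℝ => z 3 / μ) :=
          fun z => (hasF_div μ z).differentiableAt
        exact ((hAd 0).mul (Real.differentiable_sin.comp hd3)).add
          ((hAd 2).mul (Real.differentiable_cos.comp hd3))
      refine is_const_of_fderiv_eq_zero hdiff (fun z => ?_) x 0
      have hsin := (Real.hasDerivAt_sin (z 3 / μ)).comp_hasFDerivAt z (hasF_div μ z)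
      have hcos := (Real.hasDerivAt_cos (z 3 / μ)).comp_hasFDerivAt z (hasF_div μ z)
      simp only [Function.comp_def] at hsin hcos
      have hDU : HasFDerivAt (fun z => A z 0 * Real.sin (z 3 / μ) + A z 2 * Real.cos (z 3 / μ)) _ z :=
        (((hAd 0) z).hasFDerivAt.mul hsin).add (((hAd 2) z).hasFDerivAt.mul hcos)
      rw [hU, hDU.fderiv]
      ext w
      simp only [ContinuousLinearMap.add_apply, ContinuousLinearMap.coe_smul',
        Pi.smul_apply, ContinuousLinearMap.proj_apply, smul_eq_mul,
        ContinuousLinearMap.zero_apply, hF]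
      simp only [g0, g2]
      ring
    have hVc : ∀ x : Fin 4 → ℝ, V x = V 0 := by
      intro x
      have hdiff : Differentiable ℝ V := by
        have hd3 : Differentiable ℝ (fun z : Fin 4 → ℝ => z 3 / μ) :=
          fun z => (hasF_div μ z).differentiableAt
        exact ((hAd 0).mul (Real.differentiable_cos.comp hd3)).sub
          ((hAd 2).mul (Real.differentiable_sin.comp hd3))
      refine is_const_of_fderiv_eq_zero hdiff (fun z => ?_) x 0
      have hsin := (Real.hasDerivAt_sin (z 3 / μ)).comp_hasFDerivAt z (hasF_div μ z)
      have hcos := (Real.hasDerivAt_cos (z 3 / μ)).comp_hasFDerivAt z (hasF_div μ z)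
      simp only [Function.comp_def] at hsin hcos
      have hDV : HasFDerivAt (fun z => A z 0 * Real.cos (z 3 / μ) - A z 2 * Real.sin (z 3 / μ)) _ z :=
        (((hAd 0) z).hasFDerivAt.mul hcos).sub (((hAd 2) z).hasFDerivAt.mul hsin)
      rw [hV, hDV.fderiv]
      ext w
      simp only [ContinuousLinearMap.coe_sub', Pi.sub_apply,
        ContinuousLinearMap.add_apply, ContinuousLinearMap.coe_smul',
        Pi.smul_apply, ContinuousLinearMap.proj_apply, smul_eq_mul,
        ContinuousLinearMap.zero_apply, hF]
      simp only [g0, g2]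
      ring
    refine ⟨U 0, V 0, A 0 1, A 0 3, fun x => ?_⟩
    have hu' : A x 0 * Real.sin (x 3 / μ) + A x 2 * Real.cos (x 3 / μ) = U 0 := hUc x
    have hv' : A x 0 * Real.cos (x 3 / μ) - A x 2 * Real.sin (x 3 / μ) = V 0 := hVc x
    have hpyth := Real.sin_sq_add_cos_sq (x 3 / μ)
    refine ⟨?_, ?_, c1 x, c3 x⟩
    · linear_combination Real.sin (x 3 / μ) * hu' + Real.cos (x 3 / μ) * hv' - A x 0 * hpyth
    · linear_combination Real.cos (x 3 / μ) * hu' - Real.sin (x 3 / μ) * hv' - A x 2 * hpyth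
  · rintro ⟨C1, C2, C3, C4, h⟩
    have eA0 : (fun y => A y 0) = fun y => C1 * Real.sin (y 3 / μ) + C2 * Real.cos (y 3 / μ) :=
      funext fun y => (h y).1
    have eA2 : (fun y => A y 2) = fun y => C1 * Real.cos (y 3 / μ) - C2 * Real.sin (y 3 / μ) :=
      funext fun y => (h y).2.1
    have eA1 : (fun y => A y 1) = fun _ => C3 := funext fun y => (h y).2.2.1
    have eA3 : (fun y => A y 3) = fun _ => C4 := funext fun y => (h y).2.2.2
    have pdA1 : ∀ (j : Fin 4) (x : Fin 4 → ℝ), pd j (fun y => A y 1) x = 0 := by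
      intro j x; rw [eA1]; exact pd_const j C3 x
    have pdA3 : ∀ (j : Fin 4) (x : Fin 4 → ℝ), pd j (fun y => A y 3) x = 0 := by
      intro j x; rw [eA3]; exact pd_const j C4 x
    have pdA0 : ∀ (j : Fin 4) (x : Fin 4 → ℝ), pd j (fun y => A y 0) x
        = (C1 * Real.cos (x 3 / μ) - C2 * Real.sin (x 3 / μ)) * μ⁻¹
            * (Pi.single j 1 : Fin 4 → ℝ) 3 := by
      intro j x
      have hsin := (Real.hasDerivAt_sin (x 3 / μ)).comp_hasFDerivAt x (hasF_div μ x)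
      have hcos := (Real.hasDerivAt_cos (x 3 / μ)).comp_hasFDerivAt x (hasF_div μ x)
      simp only [Function.comp_def] at hsin hcos
      have hD : HasFDerivAt (fun y => C1 * Real.sin (y 3 / μ) + C2 * Real.cos (y 3 / μ)) _ x :=
        (hsin.const_mul C1).add (hcos.const_mul C2)
      rw [eA0, pd, hD.fderiv]
      simp only [ContinuousLinearMap.add_apply, ContinuousLinearMap.coe_smul',
        Pi.smul_apply, ContinuousLinearMap.proj_apply, smul_eq_mul]
      ring
    have pdA2 : ∀ (j : Fin 4) (x : Fin 4 → ℝ), pd j (fun y => A y 2) x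
        = -(C1 * Real.sin (x 3 / μ) + C2 * Real.cos (x 3 / μ)) * μ⁻¹
            * (Pi.single j 1 : Fin 4 → ℝ) 3 := by
      intro j x
      have hsin := (Real.hasDerivAt_sin (x 3 / μ)).comp_hasFDerivAt x (hasF_div μ x)
      have hcos := (Real.hasDerivAt_cos (x 3 / μ)).comp_hasFDerivAt x (hasF_div μ x)
      simp only [Function.comp_def] at hsin hcos
      have hD : HasFDerivAt (fun y => C1 * Real.cos (y 3 / μ) - C2 * Real.sin (y 3 / μ)) _ x :=
        (hcos.const_mul C1).sub (hsin.const_mul C2)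
      rw [eA2, pd, hD.fderiv]
      simp only [ContinuousLinearMap.coe_sub', Pi.sub_apply,
        ContinuousLinearMap.add_apply, ContinuousLinearMap.coe_smul',
        Pi.smul_apply, ContinuousLinearMap.proj_apply, smul_eq_mul]
      ring
    have hμ' : μ⁻¹ * μ = 1 := inv_mul_cancel₀ hμ
    refine ⟨?_, ?_, ?_, ?_⟩
    · intro x i
      fin_cases i <;>
        simp [lieCov, e1, Fin.sum_univ_four, pd_const, pdA0, pdA1, pdA2, pdA3,
          Pi.single_apply]
    · intro x i
      fin_cases i <;>
        simp [lieCov, e2, Fin.sum_univ_four, pd_const, pdA0, pdA1, pdA2, pdA3,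
          Pi.single_apply]
    · intro x i
      fin_cases i <;>
        simp [lieCov, e3, Fin.sum_univ_four, pd_const, pdA0, pdA1, pdA2, pdA3,
          Pi.single_apply]
    · intro x i
      obtain ⟨ha0, ha2, ha1, ha3⟩ := h x
      fin_cases i
      · simp [lieCov, Fin.sum_univ_four, pd_const, pdA0, pdA1, pdA2, pdA3,
            pd_proj, pd_neg, Pi.single_apply, ha0, ha2, ha1, ha3]
        field_simp
        try ring
      · simp [lieCov, Fin.sum_univ_four, pd_const, pdA0, pdA1, pdA2, pdA3,
            pd_proj, pd_neg, Pi.single_apply, ha0, ha2, ha1, ha3]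
      · simp [lieCov, Fin.sum_univ_four, pd_const, pdA0, pdA1, pdA2, pdA3,
            pd_proj, pd_neg, Pi.single_apply, ha0, ha2, ha1, ha3]
        field_simp
        try ring
      · simp [lieCov, Fin.sum_univ_four, pd_const, pdA0, pdA1, pdA2, pdA3,
            pd_proj, pd_neg, Pi.single_apply, ha0, ha2, ha1, ha3]
end
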